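/- arXiv:1907.01259 — 3 statements merged into one kernel-verified Lean document; each statement's English description precedes it below -/
import Mathlib

section
/- Let X be a pure finite n-dimensional simplicial complex. Define constants recursively by M_{-1} = 1 and M_k = Fill_k((k+1)·M_{k-1} + 1) for 0 ≤ k ≤ n−1. If for some 0 ≤ k ≤ n−1 one has Sys_j(X) > (j+1)·M_{j-1} + 1 for every 0 ≤ j ≤ k, then Crad_k(X) ≤ M_k. -/
open Finset

/-- A finite simplicial complex on vertex type `V`. -/
structure SCplx (V : Type) [DecidableEq V] where
  faces : Finset (Finset V)
  empty_mem : ∅ ∈ faces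
  down_closed : ∀ σ ∈ faces, ∀ τ ⊆ σ, τ ∈ faces

namespace SCplx

variable {V : Type} [DecidableEq V]

/-- Faces of cardinality `m`, i.e. the faces in `X(m-1)`. -/
def cfaces (X : SCplx V) (m : ℕ) : Finset (Finset V) :=
  X.faces.filter fun σ => σ.card = m

/-- `X` is pure `n`-dimensional. -/
def Pure (X : SCplx V) (n : ℕ) : Prop :=
  ∀ σ ∈ X.faces, ∃ τ ∈ X.cfaces (n + 1), σ ⊆ τ

/-- a chain/cochain of grade `m`: supported on faces of cardinality `m`. -/
def IsGraded (X : SCplx V) (m : ℕ) (c : Finset V → ZMod 2) : Prop :=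
  ∀ σ, c σ ≠ 0 → σ ∈ X.cfaces m

/-- boundary map (all degrees simultaneously, with the reduced convention `∂₀{v} = ∅`). -/
def bdry (X : SCplx V) (c : Finset V → ZMod 2) : Finset V → ZMod 2 := fun τ =>
  ∑ σ ∈ X.faces.filter (fun σ => τ ⊆ σ ∧ σ.card = τ.card + 1), c σ

/-- coboundary map (all degrees simultaneously). -/
def cobdry (X : SCplx V) (c : Finset V → ZMod 2) : Finset V → ZMod 2 := fun σ =>
  if σ ∈ X.faces then ∑ τ ∈ X.faces.filter (fun τ => τ ⊆ σ ∧ τ.card + 1 = σ.card), c τ else 0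

/-- support of a chain/cochain. -/
def supp (X : SCplx V) (c : Finset V → ZMod 2) : Finset (Finset V) :=
  X.faces.filter fun σ => c σ ≠ 0

/-- the size `|A|` of a chain. -/
def chainCard (X : SCplx V) (c : Finset V → ZMod 2) : ℕ := (X.supp c).card

/-- the chain consisting of a single simplex. -/
def sChain (τ : Finset V) : Finset V → ZMod 2 := fun σ => if σ = τ then 1 else 0

/-- the weight `w(τ)` in a pure `n`-dimensional complex. -/
noncomputable def w (X : SCplx V) (n : ℕ) (τ : Finset V) : ℝ :=
  (((X.cfaces (n + 1)).filter fun σ => τ ⊆ σ).card : ℝ) /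
    (((n + 1).choose τ.card : ℝ) * ((X.cfaces (n + 1)).card : ℝ))

/-- the weight `w(φ)` of a cochain. -/
noncomputable def wC (X : SCplx V) (n : ℕ) (c : Finset V → ZMod 2) : ℝ :=
  ∑ τ ∈ X.supp c, X.w n τ

/-- `φ ∈ B^k(X)`, i.e. `φ` is in the image of `d_{k-1}` on `C^{k-1}(X)`. -/
def IsCoboundary (X : SCplx V) (k : ℕ) (φ : Finset V → ZMod 2) : Prop :=
  ∃ ψ, X.IsGraded k ψ ∧ φ = X.cobdry ψ

/-- evaluation `φ(A)` of a cochain on a chain. -/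
def pair (X : SCplx V) (φ c : Finset V → ZMod 2) : ZMod 2 :=
  ∑ τ ∈ X.faces, φ τ * c τ

/-- A cone function for dimensions `-1,…,K-1` (i.e. a `(K-1)`-cone function)
with apex `v`; chains of dimension `j` are represented in grade (cardinality) `j+1`. -/
structure ConeFun (X : SCplx V) (K : ℕ) (v : V) where
  toFun : (Finset V → ZMod 2) → (Finset V → ZMod 2)
  map_add : ∀ c₁ c₂, toFun (c₁ + c₂) = toFun c₁ + toFun c₂
  graded : ∀ m ≤ K, ∀ c, X.IsGraded m c → X.IsGraded (m + 1) (toFun c)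
  apex : toFun (sChain ∅) = sChain {v}
  cone_eq : ∀ m, 1 ≤ m → m ≤ K → ∀ c, X.IsGraded m c →
    X.bdry (toFun c) = c + toFun (X.bdry c)

/-- the volume of a cone function. -/
def ConeFun.Vol {X : SCplx V} {K : ℕ} {v : V} (C : ConeFun X K v) : ℕ :=
  (X.cfaces K).sup fun τ => X.chainCard (C.toFun (sChain τ))

/-- the cone radius `Crad_{K-1}(X)`. -/
noncomputable def Crad (X : SCplx V) (K : ℕ) : ℕ∞ :=
  ⨅ (v : V) (C : ConeFun X K v), (C.Vol : ℕ∞)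

/-- push-forward of chains along a permutation of the vertices. -/
def pushChain (e : Equiv.Perm V) (c : Finset V → ZMod 2) : Finset V → ZMod 2 :=
  fun σ => c (σ.image e.symm)

/-- the action `ρ(g).f` of a group element on a cone function (on the level of raw maps). -/
def coneAct {G : Type*} [Group G] (ρ : G →* Equiv.Perm V) (g : G)
    (f : (Finset V → ZMod 2) → (Finset V → ZMod 2)) :
    (Finset V → ZMod 2) → (Finset V → ZMod 2) :=
  fun c => pushChain (ρ g) (f (pushChain (ρ g⁻¹) c))

/-- `c ∈ Z_k(X)` : a cycle of dimension `k` (grade `k+1`). -/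
def IsCycle (X : SCplx V) (k : ℕ) (c : Finset V → ZMod 2) : Prop :=
  X.IsGraded (k + 1) c ∧ X.bdry c = 0

/-- `c ∈ B_k(X)` : a boundary of dimension `k` (grade `k+1`). -/
def IsBdryChain (X : SCplx V) (k : ℕ) (c : Finset V → ZMod 2) : Prop :=
  ∃ a, X.IsGraded (k + 2) a ∧ X.bdry a = c

/-- the size of the smallest `k`-systole. -/
noncomputable def Sys (X : SCplx V) (k : ℕ) : ℕ∞ :=
  ⨅ (c : {c : Finset V → ZMod 2 // X.IsCycle k c ∧ ¬X.IsBdryChain k c}),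
    (X.chainCard c.1 : ℕ∞)

/-- `Fill_k(B)` : the size of the smallest filling of the cycle `B`. -/
noncomputable def FillB (X : SCplx V) (k : ℕ) (B : Finset V → ZMod 2) : ℕ∞ :=
  ⨅ (a : {a : Finset V → ZMod 2 // X.IsGraded (k + 2) a ∧ X.bdry a = B}),
    (X.chainCard a.1 : ℕ∞)

/-- `Fill_k(M)` : the filling function. -/
noncomputable def Fill (X : SCplx V) (k : ℕ) (M : ℕ∞) : ℕ∞ :=
  ⨆ (B : {B : Finset V → ZMod 2 // X.IsCycle k B ∧ (X.chainCard B : ℕ∞) ≤ M}),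
    X.FillB k B.1

/-- the constants `M_{k-1}` of Proposition `filling constants prop` (index shifted by one:
`Mconst X (k+1) = M_k`). -/
noncomputable def Mconst (X : SCplx V) : ℕ → ℕ∞
  | 0 => 1
  | (j + 1) => X.Fill j (((j : ℕ∞) + 1) * X.Mconst j + 1)

end SCplx

/-!
Fix a vertex `v` and build the cones `C τ` over the faces `τ` of `X` by induction on `|τ|`, starting
from `C ∅ = {v}`. The cone over a face `τ` with `|τ| = m + 1` must have boundary
`B = τ + ∑ₓ C (τ ∖ x)`. Since the cones over the facets already satisfy the cone equation and
`∂∂ = 0`, `B` is an `m`-cycle, of size at most `1 + (m + 1) M_{m-1} < Sys_m`; so `B` is a boundary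
and has a filling of size at most `Fill_m((m + 1) M_{m-1} + 1) = M_m`. Extending `τ ↦ C τ`
linearly gives a `k`-cone function of volume at most `M_k`.
-/

namespace SCplx

variable {V : Type} [DecidableEq V] {X : SCplx V}

lemma bdry_add (c d : Finset V → ZMod 2) : X.bdry (c + d) = X.bdry c + X.bdry d := by
  funext τ
  simp [bdry, Finset.sum_add_distrib]

lemma bdry_smul (r : ZMod 2) (c : Finset V → ZMod 2) : X.bdry (r • c) = r • X.bdry c := by
  funext τ
  simp [bdry, Finset.mul_sum]

lemma bdry_sum {ι : Type*} (s : Finset ι) (c : ι → Finset V → ZMod 2) :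
    X.bdry (∑ i ∈ s, c i) = ∑ i ∈ s, X.bdry (c i) := by
  funext τ
  simp only [bdry, Finset.sum_apply]
  exact Finset.sum_comm

lemma mem_cfaces {m : ℕ} {σ : Finset V} : σ ∈ X.cfaces m ↔ σ ∈ X.faces ∧ σ.card = m :=
  Finset.mem_filter

lemma isGraded_sChain {τ : Finset V} (hτ : τ ∈ X.faces) : X.IsGraded τ.card (sChain τ) := by
  intro σ hσ
  by_cases h : σ = τ
  · exact mem_cfaces.2 ⟨h ▸ hτ, h ▸ rfl⟩
  · simp [sChain, h] at hσ

lemma isGraded_add {m : ℕ} {c d : Finset V → ZMod 2} (hc : X.IsGraded m c)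
    (hd : X.IsGraded m d) : X.IsGraded m (c + d) := by
  intro σ hσ
  by_cases h : c σ = 0
  · exact hd σ (by simpa [h] using hσ)
  · exact hc σ h

lemma isGraded_sum {m : ℕ} {ι : Type*} {s : Finset ι} {c : ι → Finset V → ZMod 2}
    (h : ∀ i ∈ s, X.IsGraded m (c i)) : X.IsGraded m (∑ i ∈ s, c i) := by
  intro σ hσ
  rw [Finset.sum_apply] at hσ
  obtain ⟨i, hi, hne⟩ := Finset.exists_ne_zero_of_sum_ne_zero hσ
  exact h i hi σ hne

lemma chainCard_add_le (c d : Finset V → ZMod 2) :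
    X.chainCard (c + d) ≤ X.chainCard c + X.chainCard d := by
  refine (Finset.card_le_card fun σ hσ => ?_).trans (Finset.card_union_le _ _)
  simp only [supp, Finset.mem_filter, Finset.mem_union] at hσ ⊢
  by_cases h : c σ = 0
  · exact Or.inr ⟨hσ.1, by simpa [h] using hσ.2⟩
  · exact Or.inl ⟨hσ.1, h⟩

lemma chainCard_sum_le {ι : Type*} (s : Finset ι) (c : ι → Finset V → ZMod 2) :
    X.chainCard (∑ i ∈ s, c i) ≤ ∑ i ∈ s, X.chainCard (c i) :=
  Finset.le_sum_of_subadditive _ (by simp [chainCard, supp]) chainCard_add_le s c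

lemma chainCard_sChain {τ : Finset V} (hτ : τ ∈ X.faces) : X.chainCard (sChain τ) = 1 := by
  rw [chainCard, Finset.card_eq_one]
  refine ⟨τ, Finset.ext fun σ => ?_⟩
  by_cases h : σ = τ <;> simp [supp, sChain, h, hτ]

lemma sum_sChain_apply (S : Finset (Finset V)) (σ : Finset V) :
    (∑ ρ ∈ S, sChain ρ) σ = if σ ∈ S then 1 else 0 := by
  simp [Finset.sum_apply, sChain]

lemma mem_image_erase_iff {σ τ : Finset V} :
    σ ∈ τ.image τ.erase ↔ σ ⊆ τ ∧ τ.card = σ.card + 1 := by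
  rw [Finset.mem_image, ← Finset.covBy_iff_exists_erase, Finset.covBy_iff_card_sdiff_eq_one]
  refine and_congr_right fun h => ?_
  have := Finset.card_le_card h
  rw [Finset.card_sdiff_of_subset h]
  omega

lemma bdry_sChain {τ : Finset V} (hτ : τ ∈ X.faces) :
    X.bdry (sChain τ) = ∑ x ∈ τ, sChain (τ.erase x) := by
  rw [← Finset.sum_image fun x hx y hy => (Finset.erase_inj τ hx).1]
  funext σ
  simp only [sum_sChain_apply, mem_image_erase_iff, bdry, sChain, Finset.sum_ite_eq',
    Finset.mem_filter, hτ, true_and]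

omit [DecidableEq V] in
lemma chain_add_self (c : Finset V → ZMod 2) : c + c = 0 := by
  funext σ
  exact CharTwo.add_self_eq_zero (c σ)

lemma sum_sum_erase_erase_eq_zero (τ : Finset V) (c : Finset V → Finset V → ZMod 2) :
    ∑ x ∈ τ, ∑ y ∈ τ.erase x, c ((τ.erase x).erase y) = 0 := by
  rw [Finset.sum_sigma']
  refine Finset.sum_involution (fun p _ => ⟨p.2, p.1⟩) (fun p _ => ?_) (fun p hp _ => ?_)
    (fun p hp => ?_) (fun p _ => rfl)
  · rw [Finset.erase_right_comm]
    exact chain_add_self _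
  · simp only [Finset.mem_sigma, Finset.mem_erase] at hp
    exact fun h => hp.2.1 (congrArg Sigma.fst h)
  · simp only [Finset.mem_sigma, Finset.mem_erase] at hp ⊢
    exact ⟨hp.2.2, Ne.symm hp.2.1, hp.1⟩

def extend (X : SCplx V) (f : Finset V → Finset V → ZMod 2) :
    (Finset V → ZMod 2) →ₗ[ZMod 2] (Finset V → ZMod 2) where
  toFun c := ∑ τ ∈ X.faces, c τ • f τ
  map_add' c d := by simp only [Pi.add_apply, add_smul, Finset.sum_add_distrib]
  map_smul' r c := by simp only [Pi.smul_apply, smul_eq_mul, mul_smul, Finset.smul_sum,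
    RingHom.id_apply]

lemma extend_apply (f : Finset V → Finset V → ZMod 2) (c : Finset V → ZMod 2) :
    X.extend f c = ∑ τ ∈ X.faces, c τ • f τ := rfl

lemma extend_sChain (f : Finset V → Finset V → ZMod 2) {τ : Finset V} (hτ : τ ∈ X.faces) :
    X.extend f (sChain τ) = f τ := by
  simp [extend_apply, sChain, ite_smul, hτ]

lemma extend_congr {m : ℕ} {f g : Finset V → Finset V → ZMod 2} {c : Finset V → ZMod 2}
    (hc : X.IsGraded m c) (hfg : ∀ τ ∈ X.cfaces m, f τ = g τ) : X.extend f c = X.extend g c := by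
  refine Finset.sum_congr rfl fun τ _ => ?_
  by_cases h : c τ = 0
  · simp [h]
  · rw [hfg τ (hc τ h)]

lemma extend_sChain_self {m : ℕ} {c : Finset V → ZMod 2} (hc : X.IsGraded m c) :
    X.extend sChain c = c := by
  funext σ
  by_cases hσ : σ ∈ X.faces
  · simp [extend_apply, Finset.sum_apply, sChain, hσ]
  · have : c σ = 0 := by_contra fun h => hσ (mem_cfaces.1 (hc σ h)).1
    simp [extend_apply, Finset.sum_apply, sChain, hσ, this]

lemma isGraded_extend {m m' : ℕ} {f : Finset V → Finset V → ZMod 2} {c : Finset V → ZMod 2}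
    (hf : ∀ τ ∈ X.cfaces m, X.IsGraded m' (f τ)) (hc : X.IsGraded m c) :
    X.IsGraded m' (X.extend f c) := by
  intro σ hσ
  rw [extend_apply, Finset.sum_apply] at hσ
  obtain ⟨τ, -, hne⟩ := Finset.exists_ne_zero_of_sum_ne_zero hσ
  have hcτ : c τ ≠ 0 := fun h => hne (by simp [h])
  exact hf τ (hc τ hcτ) σ fun h => hne (by simp [h])

lemma bdry_extend (f : Finset V → Finset V → ZMod 2) (c : Finset V → ZMod 2) :
    X.bdry (X.extend f c) = X.extend (fun τ => X.bdry (f τ)) c := by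
  simp only [extend_apply, bdry_sum, bdry_smul]

lemma extend_extend (f g : Finset V → Finset V → ZMod 2) (c : Finset V → ZMod 2) :
    X.extend f (X.extend g c) = X.extend (fun τ => X.extend f (g τ)) c := by
  simp only [extend_apply g, map_sum, map_smul]
  rfl

lemma extend_bdry {m : ℕ} (f : Finset V → Finset V → ZMod 2) {c : Finset V → ZMod 2}
    (hc : X.IsGraded m c) :
    X.extend f (X.bdry c) = X.extend (fun τ => ∑ x ∈ τ, f (τ.erase x)) c := by
  calc X.extend f (X.bdry c) = X.extend f (X.bdry (X.extend sChain c)) := by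
        rw [extend_sChain_self hc]
    _ = X.extend (fun τ => X.extend f (X.bdry (sChain τ))) c := by
        rw [bdry_extend, extend_extend]
    _ = _ := extend_congr hc fun τ hτ => ?_
  have hτ := (mem_cfaces.1 hτ).1
  rw [bdry_sChain hτ, map_sum]
  exact Finset.sum_congr rfl fun x _ =>
    extend_sChain f (X.down_closed τ hτ _ (Finset.erase_subset x τ))

lemma extend_fun_add (f g : Finset V → Finset V → ZMod 2) (c : Finset V → ZMod 2) :
    X.extend (fun τ => f τ + g τ) c = X.extend f c + X.extend g c := by
  simp only [extend_apply, smul_add, Finset.sum_add_distrib]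

lemma isCycle_sChain_add_sum_erase {m : ℕ} {f : Finset V → Finset V → ZMod 2} {τ : Finset V}
    (hτ : τ ∈ X.cfaces (m + 1)) (hf : ∀ x ∈ τ, X.IsGraded (m + 1) (f (τ.erase x)))
    (hbdry : ∀ x ∈ τ, X.bdry (f (τ.erase x)) =
      sChain (τ.erase x) + ∑ y ∈ τ.erase x, f ((τ.erase x).erase y)) :
    X.IsCycle m (sChain τ + ∑ x ∈ τ, f (τ.erase x)) := by
  obtain ⟨hτ, hcard⟩ := mem_cfaces.1 hτ
  refine ⟨isGraded_add (hcard ▸ isGraded_sChain hτ) (isGraded_sum hf), ?_⟩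
  rw [bdry_add, bdry_sum, bdry_sChain hτ, Finset.sum_congr rfl hbdry, Finset.sum_add_distrib,
    ← add_assoc, chain_add_self, zero_add, sum_sum_erase_erase_eq_zero]

lemma isBdryChain_of_chainCard_lt_sys {k : ℕ} {c : Finset V → ZMod 2} (hc : X.IsCycle k c)
    (hlt : (X.chainCard c : ℕ∞) < X.Sys k) : X.IsBdryChain k c := by
  by_contra hb
  exact hlt.not_ge <| iInf_le (fun c : {c // X.IsCycle k c ∧ ¬X.IsBdryChain k c} =>
    (X.chainCard c.1 : ℕ∞)) ⟨c, hc, hb⟩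

lemma exists_filling_le_fill {k : ℕ} {M : ℕ∞} {B : Finset V → ZMod 2} (hB : X.IsCycle k B)
    (hBM : (X.chainCard B : ℕ∞) ≤ M) (hMsys : M < X.Sys k) :
    ∃ a, X.IsGraded (k + 2) a ∧ X.bdry a = B ∧ (X.chainCard a : ℕ∞) ≤ X.Fill k M := by
  obtain ⟨a, ha, rfl⟩ := isBdryChain_of_chainCard_lt_sys hB (hBM.trans_lt hMsys)
  have : Nonempty {a' // X.IsGraded (k + 2) a' ∧ X.bdry a' = X.bdry a} := ⟨⟨a, ha, rfl⟩⟩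
  obtain ⟨⟨a', ha', ha'a⟩, hmin⟩ := ENat.exists_eq_iInf
    fun a' : {a' // X.IsGraded (k + 2) a' ∧ X.bdry a' = X.bdry a} => (X.chainCard a'.1 : ℕ∞)
  refine ⟨a', ha', ha'a, hmin.trans_le ?_⟩
  exact le_iSup (fun B' : {B' // X.IsCycle k B' ∧ (X.chainCard B' : ℕ∞) ≤ M} =>
    X.FillB k B'.1) ⟨X.bdry a, hB, hBM⟩

structure IsConeFamily (X : SCplx V) (v : V) (m : ℕ) (f : Finset V → Finset V → ZMod 2) :
    Prop where
  apex : f ∅ = sChain {v}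
  isGraded : ∀ τ ∈ X.faces, τ.card ≤ m → X.IsGraded (τ.card + 1) (f τ)
  bdry_eq : ∀ τ ∈ X.faces, τ.card ≤ m → X.bdry (f τ) = sChain τ + ∑ x ∈ τ, f (τ.erase x)

lemma isConeFamily_zero {v : V} (hv : {v} ∈ X.faces) :
    X.IsConeFamily v 0 fun _ => sChain {v} where
  apex := rfl
  isGraded τ _ hτ := by
    rw [Finset.card_eq_zero.1 (Nat.le_zero.1 hτ)]
    exact isGraded_sChain hv
  bdry_eq τ _ hτ := by
    obtain rfl := Finset.card_eq_zero.1 (Nat.le_zero.1 hτ)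
    simp [bdry_sChain hv]

namespace IsConeFamily

variable {v : V} {K m : ℕ} {f : Finset V → Finset V → ZMod 2}

def coneFun (hf : X.IsConeFamily v K f) : ConeFun X K v where
  toFun := X.extend f
  map_add := map_add _
  graded m hm _ hc := isGraded_extend (fun τ hτm => by
    obtain ⟨hτ, rfl⟩ := mem_cfaces.1 hτm
    exact hf.isGraded τ hτ hm) hc
  apex := by rw [extend_sChain f X.empty_mem, hf.apex]
  cone_eq m _ hm c hc := by
    rw [bdry_extend, extend_bdry f hc]
    nth_rw 2 [← extend_sChain_self hc]
    rw [← extend_fun_add]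
    refine extend_congr hc fun τ hτm => ?_
    obtain ⟨hτ, rfl⟩ := mem_cfaces.1 hτm
    exact hf.bdry_eq τ hτ hm

lemma crad_le (hf : X.IsConeFamily v K f) {M : ℕ∞}
    (hM : ∀ τ ∈ X.cfaces K, (X.chainCard (f τ) : ℕ∞) ≤ M) : X.Crad K ≤ M := by
  refine (iInf₂_le v hf.coneFun).trans ?_
  rw [ConeFun.Vol, Finset.apply_sup_eq_sup_comp_of_linearOrder _ Nat.mono_cast Nat.cast_zero]
  refine Finset.sup_le fun τ hτ => ?_
  change (X.chainCard (X.extend f (sChain τ)) : ℕ∞) ≤ M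
  rw [extend_sChain f (mem_cfaces.1 hτ).1]
  exact hM τ hτ

lemma exists_cone_of_card_eq_succ (hf : X.IsConeFamily v m f)
    (hfM : ∀ τ ∈ X.faces, τ.card ≤ m → (X.chainCard (f τ) : ℕ∞) ≤ X.Mconst τ.card)
    (hsys : ((m : ℕ∞) + 1) * X.Mconst m + 1 < X.Sys m) {τ : Finset V}
    (hτ : τ ∈ X.cfaces (m + 1)) :
    ∃ a, X.IsGraded (m + 2) a ∧ X.bdry a = sChain τ + ∑ x ∈ τ, f (τ.erase x) ∧
      (X.chainCard a : ℕ∞) ≤ X.Mconst (m + 1) := by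
  obtain ⟨hτf, hcard⟩ := mem_cfaces.1 hτ
  have hfacet : ∀ x ∈ τ, τ.erase x ∈ X.faces ∧ (τ.erase x).card = m := fun x hx =>
    ⟨X.down_closed τ hτf _ (Finset.erase_subset x τ), by rw [Finset.card_erase_of_mem hx]; omega⟩
  have hcycle : X.IsCycle m (sChain τ + ∑ x ∈ τ, f (τ.erase x)) :=
    isCycle_sChain_add_sum_erase hτ
      (fun x hx => (hfacet x hx).2 ▸ hf.isGraded _ (hfacet x hx).1 (hfacet x hx).2.le)
      (fun x hx => hf.bdry_eq _ (hfacet x hx).1 (hfacet x hx).2.le)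
  have hsize : (X.chainCard (sChain τ + ∑ x ∈ τ, f (τ.erase x)) : ℕ∞) ≤
      ((m : ℕ∞) + 1) * X.Mconst m + 1 := calc
    _ ≤ ((1 + ∑ x ∈ τ, X.chainCard (f (τ.erase x)) : ℕ) : ℕ∞) := by
      gcongr
      refine (chainCard_add_le _ _).trans ?_
      rw [chainCard_sChain hτf]
      exact Nat.add_le_add_left (chainCard_sum_le _ _) 1
    _ ≤ 1 + ∑ x ∈ τ, X.Mconst m := by
      push_cast
      gcongr with x hx
      exact (hfacet x hx).2 ▸ hfM _ (hfacet x hx).1 (hfacet x hx).2.le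
    _ = ((m : ℕ∞) + 1) * X.Mconst m + 1 := by
      rw [Finset.sum_const, hcard, nsmul_eq_mul, add_comm]
      push_cast
      rfl
  exact exists_filling_le_fill hcycle hsize hsys

lemma exists_succ (hf : X.IsConeFamily v m f)
    (hfM : ∀ τ ∈ X.faces, τ.card ≤ m → (X.chainCard (f τ) : ℕ∞) ≤ X.Mconst τ.card)
    (hsys : ((m : ℕ∞) + 1) * X.Mconst m + 1 < X.Sys m) :
    ∃ g, X.IsConeFamily v (m + 1) g ∧
      ∀ τ ∈ X.faces, τ.card ≤ m + 1 → (X.chainCard (g τ) : ℕ∞) ≤ X.Mconst τ.card := by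
  classical
  choose a ha using fun τ (hτ : τ ∈ X.cfaces (m + 1)) =>
    exists_cone_of_card_eq_succ hf hfM hsys hτ
  let g τ := if hτ : τ ∈ X.cfaces (m + 1) then a τ hτ else f τ
  have hg_top {τ} (hτ : τ ∈ X.cfaces (m + 1)) : g τ = a τ hτ := dif_pos hτ
  have hg_low {τ : Finset V} (hτ : τ.card ≤ m) : g τ = f τ :=
    dif_neg fun h => by have := (mem_cfaces.1 h).2; omega
  have hg_facets {τ : Finset V} (hτ : τ.card ≤ m + 1) :
      ∑ x ∈ τ, g (τ.erase x) = ∑ x ∈ τ, f (τ.erase x) :=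
    Finset.sum_congr rfl fun x hx => hg_low (by rw [Finset.card_erase_of_mem hx]; omega)
  refine ⟨g, ⟨?_, fun τ hτ hle => ?_, fun τ hτ hle => ?_⟩, fun τ hτ hle => ?_⟩
  · rw [hg_low (by simp), hf.apex]
  all_goals rcases Nat.lt_or_eq_of_le hle with hlt | heq
  · rw [hg_low (Nat.lt_succ_iff.1 hlt)]
    exact hf.isGraded τ hτ (Nat.lt_succ_iff.1 hlt)
  · rw [heq, hg_top (mem_cfaces.2 ⟨hτ, heq⟩)]
    exact (ha τ _).1
  · rw [hg_low (Nat.lt_succ_iff.1 hlt), hf.bdry_eq τ hτ (Nat.lt_succ_iff.1 hlt), hg_facets hle]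
  · rw [hg_top (mem_cfaces.2 ⟨hτ, heq⟩), hg_facets hle]
    exact (ha τ _).2.1
  · rw [hg_low (Nat.lt_succ_iff.1 hlt)]
    exact hfM τ hτ (Nat.lt_succ_iff.1 hlt)
  · rw [heq, hg_top (mem_cfaces.2 ⟨hτ, heq⟩)]
    exact (ha τ _).2.2

end IsConeFamily

lemma exists_isConeFamily {k : ℕ} (hSys : ∀ j ≤ k, ((j : ℕ∞) + 1) * X.Mconst j + 1 < X.Sys j)
    {v : V} (hv : {v} ∈ X.faces) :
    ∀ m ≤ k + 1, ∃ f, X.IsConeFamily v m f ∧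
      ∀ τ ∈ X.faces, τ.card ≤ m → (X.chainCard (f τ) : ℕ∞) ≤ X.Mconst τ.card
  | 0, _ => ⟨_, isConeFamily_zero hv, fun τ _ hτ => by
      rw [Finset.card_eq_zero.1 (Nat.le_zero.1 hτ), chainCard_sChain hv]
      rfl⟩
  | m + 1, hm =>
    have ⟨_, hf, hfM⟩ := exists_isConeFamily hSys hv m (by omega)
    hf.exists_succ hfM (hSys m (by omega))

lemma Pure.exists_vertex {n : ℕ} (hX : X.Pure n) : ∃ v, {v} ∈ X.faces := by
  obtain ⟨τ, hτ, -⟩ := hX ∅ X.empty_mem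
  obtain ⟨hτ, hcard⟩ := mem_cfaces.1 hτ
  obtain ⟨v, hv⟩ := Finset.card_pos.1 (show 0 < τ.card by omega)
  exact ⟨v, X.down_closed τ hτ _ (Finset.singleton_subset_iff.2 hv)⟩

end SCplx

open SCplx in
theorem stmt5_general {V : Type} [DecidableEq V] (n : ℕ) (X : SCplx V) (hpure : X.Pure n)
    (k : ℕ)
    (hSys : ∀ j ≤ k, ((j : ℕ∞) + 1) * X.Mconst j + 1 < X.Sys j) :
    X.Crad (k + 1) ≤ X.Mconst (k + 1) := by
  obtain ⟨v, hv⟩ := hpure.exists_vertex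
  obtain ⟨f, hf, hfM⟩ := exists_isConeFamily hSys hv (k + 1) le_rfl
  refine hf.crad_le fun τ hτ => ?_
  obtain ⟨hτ, hcard⟩ := mem_cfaces.1 hτ
  exact hcard ▸ hfM τ hτ hcard.le

open SCplx in
/-- With `M_{-1} = 1` and `M_k = Fill_k((k+1)·M_{k-1}+1)`
(here `Mconst X (k+1) = M_k`): if `Sys_j(X) > (j+1)·M_{j-1}+1` for every `0 ≤ j ≤ k`,
then `Crad_k(X) ≤ M_k`. -/
theorem stmt5 {V : Type} [DecidableEq V] (n : ℕ) (X : SCplx V) (hpure : X.Pure n)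
    (k : ℕ) (hk : k < n)
    (hSys : ∀ j ≤ k, ((j : ℕ∞) + 1) * X.Mconst j + 1 < X.Sys j) :
    X.Crad (k + 1) ≤ X.Mconst (k + 1) :=
  stmt5_general n X hpure k hSys
end

section
/- Let n ≥ 2, let S_el = { e_{i,j}(a) : 1 ≤ i < j ≤ n+1, a ∈ F_q } (indexed by triples (i,j,a)) and let π be the canonical homomorphism from the free group on S_el to Unip_{n+1}(F_q). Let R_St be the set of Steinberg relator words: (St1) e_{i,j}(a_1)·e_{i,j}(a_2)·e_{i,j}(a_1+a_2)^{-1} for all 1 ≤ i < j ≤ n+1 and a_1,a_2 ∈ F_q, and (St2) [e_{i_1,j_1}(a_1), e_{i_2,j_2}(a_2)]·r^{-1} where r = 1 if i_1 ≠ j_2 and i_2 ≠ j_1, r = e_{i_1,j_2}(a_1 a_2) if j_1 = i_2, and r = e_{i_2,j_1}(−a_1 a_2) if j_2 = i_1. Then: (i) ker π equals the normal closure of R_St in the free group on S_el; and (ii) there is a constant C depending only on n (e.g., C = 2m + 4m + ... + 2^{C(n+1,2)}m divided by m, independent of q) such that for every prime power q, every word w ∈ ker π of length at most m can be written in the free group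 as a product of at most C·m conjugates of elements of R_St and their inverses. -/
section ElementaryUnits

variable {R : Type*} [CommRing R]

/-- The elementary matrix `e_{i,j}(a) = 1 + a·E_{i,j}` (`i ≠ j`) as a unit. -/
def elemUnit (n : ℕ) (i j : Fin n) (hij : i ≠ j) (a : R) : (Matrix (Fin n) (Fin n) R)ˣ where
  val := 1 + Matrix.single i j a
  inv := 1 + Matrix.single i j (-a)
  val_inv := by
    have h : Matrix.single i j a * Matrix.single i j (-a) = 0 :=
      Matrix.single_mul_single_of_ne _ i j _ hij.symm _
    have h2 : Matrix.single i j a + Matrix.single i j (-a) = 0 := by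
      rw [← Matrix.single_add]; simp
    have e : (1 + Matrix.single i j a) * (1 + Matrix.single i j (-a)) =
        1 + (Matrix.single i j a + Matrix.single i j (-a)) +
          Matrix.single i j a * Matrix.single i j (-a) := by noncomm_ring
    rw [e, h, h2, add_zero, add_zero]
  inv_val := by
    have h : Matrix.single i j (-a) * Matrix.single i j a = 0 :=
      Matrix.single_mul_single_of_ne _ i j _ hij.symm _
    have h2 : Matrix.single i j (-a) + Matrix.single i j a = 0 := by
      rw [← Matrix.single_add]; simp
    have e : (1 + Matrix.single i j (-a)) * (1 + Matrix.single i j a) =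
        1 + (Matrix.single i j (-a) + Matrix.single i j a) +
          Matrix.single i j (-a) * Matrix.single i j a := by noncomm_ring
    rw [e, h, h2, add_zero, add_zero]

end ElementaryUnits

/-- The index set of the generating set `S_el = {e_{i,j}(a) : 1 ≤ i < j ≤ n+1, a ∈ F}`. -/
abbrev ElIdx (n : ℕ) (F : Type) : Type :=
  {p : Fin (n + 1) × Fin (n + 1) × F // p.1 < p.2.1}

/-- The canonical homomorphism from the free group on `S_el` to the matrix group,
sending each generator `e_{i,j}(a)` to the corresponding elementary matrix.
Its image is `Unip_{n+1}(F)`. -/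
def stPi (n : ℕ) (F : Type) [Field F] :
    FreeGroup (ElIdx n F) →* (Matrix (Fin (n + 1)) (Fin (n + 1)) F)ˣ :=
  FreeGroup.lift fun t => elemUnit (n + 1) t.1.1 t.1.2.1 (ne_of_lt t.2) t.1.2.2

/-- The Steinberg relator words of type (St1):
`e_{i,j}(a₁)·e_{i,j}(a₂)·e_{i,j}(a₁+a₂)⁻¹`. -/
def stR1 (n : ℕ) (F : Type) [Field F] : Set (FreeGroup (ElIdx n F)) :=
  {w | ∃ (i j : Fin (n + 1)) (h : i < j) (a₁ a₂ : F),
    w = FreeGroup.of ⟨(i, j, a₁), h⟩ * FreeGroup.of ⟨(i, j, a₂), h⟩ *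
      (FreeGroup.of ⟨(i, j, a₁ + a₂), h⟩)⁻¹}

/-- The right-hand side `r` of the Steinberg commutator relation
`[e_{i₁,j₁}(a₁), e_{i₂,j₂}(a₂)] = r`. -/
def stTarget (n : ℕ) (F : Type) [Field F] (i₁ j₁ i₂ j₂ : Fin (n + 1))
    (h₁ : i₁ < j₁) (h₂ : i₂ < j₂) (a₁ a₂ : F) : FreeGroup (ElIdx n F) :=
  if h : j₁ = i₂ then FreeGroup.of ⟨(i₁, j₂, a₁ * a₂), by subst h; exact h₁.trans h₂⟩
  else if h' : j₂ = i₁ then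
    FreeGroup.of ⟨(i₂, j₁, -(a₁ * a₂)), by subst h'; exact h₂.trans h₁⟩
  else 1

open scoped commutatorElement

/-- The Steinberg relator words of type (St2): `[e_{i₁,j₁}(a₁), e_{i₂,j₂}(a₂)]·r⁻¹` where
`r = 1` if `i₁ ≠ j₂`, `i₂ ≠ j₁`; `r = e_{i₁,j₂}(a₁a₂)` if `j₁ = i₂`; and
`r = e_{i₂,j₁}(-a₁a₂)` if `j₂ = i₁`. -/
def stR2 (n : ℕ) (F : Type) [Field F] : Set (FreeGroup (ElIdx n F)) :=
  {w | ∃ (i₁ j₁ i₂ j₂ : Fin (n + 1)) (h₁ : i₁ < j₁) (h₂ : i₂ < j₂) (a₁ a₂ : F),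
    w = ⁅FreeGroup.of (⟨(i₁, j₁, a₁), h₁⟩ : ElIdx n F),
          FreeGroup.of (⟨(i₂, j₂, a₂), h₂⟩ : ElIdx n F)⁆ *
      (stTarget n F i₁ j₁ i₂ j₂ h₁ h₂ a₁ a₂)⁻¹}

/-!
Every word in the generators is equal, modulo the Steinberg relators, to the normal form of the
matrix it represents: the product over the rows `i`, from the last row up, of the row words
`∏ₖ e_{i,k}(M i k)`. Appending a generator `e_{i,j}(a)` to a normal form costs a number of
relators depending only on `n`. The generator moves left through each row `i' < i`, where the
commutator relation with `e_{i',i}(b)` leaves behind the letter `e_{i',j}(b a)` of that same row;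
that letter, and finally `e_{i,j}(a)` itself, are merged into their rows by commutations and (St1).
Starting from the normal form of `1` and appending the letters of `w` one by one, a word
`w ∈ ker π` ends at the normal form of `1` again, so `w` has area at most `C·|w|` with no
additive constant. This also puts `ker π` inside the normal closure of the relators; the
reverse inclusion is a computation with elementary matrices.
-/

section Area

variable {G : Type*} [Group G] (R : Set G)

def AreaLE (k : ℕ) (w : G) : Prop :=
  ∃ L : List (G × G), L.length ≤ k ∧ (∀ p ∈ L, p.2 ∈ R ∨ p.2⁻¹ ∈ R) ∧
    w = (L.map fun p => p.1⁻¹ * p.2 * p.1).prod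

def AreaRel (k : ℕ) (w w' : G) : Prop :=
  AreaLE R k (w * w'⁻¹)

variable {R} {k k' : ℕ} {w w' w'' : G}

namespace AreaLE

theorem one : AreaLE R 0 (1 : G) :=
  ⟨[], le_rfl, by simp, rfl⟩

theorem mono (h : AreaLE R k w) (hk : k ≤ k') : AreaLE R k' w :=
  let ⟨L, hL, hR, hw⟩ := h
  ⟨L, hL.trans hk, hR, hw⟩

theorem of_mem {r : G} (hr : r ∈ R) : AreaLE R 1 r :=
  ⟨[(1, r)], le_rfl, by simp [hr], by simp⟩

theorem mul (h : AreaLE R k w) (h' : AreaLE R k' w') : AreaLE R (k + k') (w * w') := by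
  obtain ⟨L, hL, hR, rfl⟩ := h
  obtain ⟨L', hL', hR', rfl⟩ := h'
  refine ⟨L ++ L', by simpa using add_le_add hL hL', ?_, by simp⟩
  simpa only [List.mem_append] using fun p hp => hp.elim (hR p) (hR' p)

theorem conj (h : AreaLE R k w) (v : G) : AreaLE R k (v⁻¹ * w * v) := by
  obtain ⟨L, hL, hR, rfl⟩ := h
  refine ⟨L.map fun p => (p.1 * v, p.2), by simpa using hL, ?_, ?_⟩
  · simp only [List.mem_map]
    rintro _ ⟨p, hp, rfl⟩
    exact hR p hp
  have := map_list_prod (MulAut.conj v⁻¹) (L.map fun p => p.1⁻¹ * p.2 * p.1)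
  simpa [MulAut.conj_apply, Function.comp_def, mul_assoc] using this

theorem inv (h : AreaLE R k w) : AreaLE R k w⁻¹ := by
  obtain ⟨L, hL, hR, rfl⟩ := h
  refine ⟨(L.map fun p => (p.1, p.2⁻¹)).reverse, by simpa using hL, ?_, ?_⟩
  · simp only [List.mem_reverse, List.mem_map]
    rintro _ ⟨p, hp, rfl⟩
    simpa [or_comm] using hR p hp
  · simp [List.prod_inv_reverse, Function.comp_def, mul_assoc]

theorem mem_normalClosure (h : AreaLE R k w) : w ∈ Subgroup.normalClosure R := by
  obtain ⟨L, -, hR, rfl⟩ := h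
  refine Subgroup.list_prod_mem _ fun x hx => ?_
  obtain ⟨p, hp, rfl⟩ := List.mem_map.1 hx
  have hr : p.2 ∈ Subgroup.normalClosure R :=
    (hR p hp).elim (Subgroup.subset_normalClosure ·)
      fun h => inv_inv p.2 ▸ inv_mem (Subgroup.subset_normalClosure h)
  simpa using Subgroup.normalClosure_normal.conj_mem _ hr p.1⁻¹

theorem exists_ofFn (h : AreaLE R k w) :
    ∃ l : ℕ, l ≤ k ∧ ∃ u r : Fin l → G, (∀ s, r s ∈ R ∨ (r s)⁻¹ ∈ R) ∧
      w = (List.ofFn fun s => (u s)⁻¹ * r s * u s).prod := by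
  obtain ⟨L, hL, hR, rfl⟩ := h
  refine ⟨L.length, hL, fun s => L[s].1, fun s => L[s].2, fun s => hR _ (List.getElem_mem _), ?_⟩
  rw [← List.ofFn_getElem_eq_map]
  rfl

end AreaLE

namespace AreaRel

theorem refl (w : G) : AreaRel R 0 w w := by
  simpa [AreaRel] using AreaLE.one

theorem of_eq (h : w = w') : AreaRel R 0 w w' :=
  h ▸ refl w

theorem mono (h : AreaRel R k w w') (hk : k ≤ k') : AreaRel R k' w w' :=
  AreaLE.mono h hk

theorem of_mem (h : w * w'⁻¹ ∈ R) : AreaRel R 1 w w' :=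
  AreaLE.of_mem h

theorem symm (h : AreaRel R k w w') : AreaRel R k w' w := by
  simpa [AreaRel] using AreaLE.inv h

theorem trans (h : AreaRel R k w w') (h' : AreaRel R k' w' w'') : AreaRel R (k + k') w w'' := by
  simpa [AreaRel, mul_assoc] using AreaLE.mul h h'

instance : @Trans G G G (AreaRel R k) (AreaRel R k') (AreaRel R (k + k')) :=
  ⟨trans⟩

theorem mul_right (h : AreaRel R k w w') (v : G) : AreaRel R k (w * v) (w' * v) := by
  simpa [AreaRel, mul_assoc] using h

theorem mul_left (h : AreaRel R k w w') (v : G) : AreaRel R k (v * w) (v * w') := by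
  simpa [AreaRel, mul_assoc] using AreaLE.conj h v⁻¹

theorem list_prod_map_mul {ι : Type*} {c : ℕ} {x y : ι → G} {g : G} :
    ∀ {L : List ι}, (∀ i ∈ L, AreaRel R c (x i * g) (g * y i)) →
      AreaRel R (c * L.length) ((L.map x).prod * g) (g * (L.map y).prod)
  | [], _ => by simpa using refl g
  | i :: L, h => by
    have ih := list_prod_map_mul fun j hj => h j (List.mem_cons_of_mem i hj)
    calc (List.map x (i :: L)).prod * g = x i * ((L.map x).prod * g) := by simp [mul_assoc]
      AreaRel R (c * L.length) _ (x i * g * (L.map y).prod) := by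
        simpa [mul_assoc] using ih.mul_left (x i)
      AreaRel R c _ (g * y i * (L.map y).prod) := (h i List.mem_cons_self).mul_right _
      _ = g * (List.map y (i :: L)).prod := by simp [mul_assoc]

theorem areaLE_of_mul_left {v : G} (h : AreaRel R k (v * w) v) : AreaLE R k w := by
  simpa [AreaRel, mul_assoc] using AreaLE.conj h v

end AreaRel

end Area

theorem one_add_mul_one_add_eq {R : Type*} [Ring R] {A B : R} (hA : (A * B - B * A) * A = 0)
    (hB : (A * B - B * A) * B = 0) :
    (1 + A) * (1 + B) = (1 + (A * B - B * A)) * ((1 + B) * (1 + A)) := by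
  have hBA : (A * B - B * A) * (B * A) = 0 := by rw [← mul_assoc, hB, zero_mul]
  have h : (1 + (A * B - B * A)) * ((1 + B) * (1 + A)) = (1 + A) * (1 + B) +
      (A * B - B * A) * B + (A * B - B * A) * A + (A * B - B * A) * (B * A) := by noncomm_ring
  rw [h, hA, hB, hBA, add_zero, add_zero, add_zero]

namespace Matrix

variable {ι R : Type*}

def IsUnitriangular [LE ι] [DecidableEq ι] [Zero R] [One R] (M : Matrix ι ι R) : Prop :=
  ∀ i j, j ≤ i → M i j = (1 : Matrix ι ι R) i j

theorem isUnitriangular_one [LE ι] [DecidableEq ι] [Zero R] [One R] :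
    IsUnitriangular (1 : Matrix ι ι R) :=
  fun _ _ _ => rfl

variable [Fintype ι] [CommRing R]

theorem mul_transvection_row [DecidableEq ι] (M : Matrix ι ι R) (i j : ι) (c : R) (a : ι) :
    (M * transvection i j c) a = Function.update (M a) j (M a j + c * M a i) := by
  funext b
  by_cases hb : b = j
  · subst hb; simp
  · simp [hb]

theorem IsUnitriangular.mul_transvection [LinearOrder ι] {M : Matrix ι ι R}
    (hM : IsUnitriangular M) {i j : ι} (hij : i < j) (c : R) :
    IsUnitriangular (M * transvection i j c) := by
  intro a b hba
  rw [mul_transvection_row, Function.update_apply]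
  split_ifs with hb
  · subst hb
    rw [hM a b hba, hM a i (hij.le.trans hba), one_apply_ne (hij.trans_le hba).ne', mul_zero,
      add_zero]
  · exact hM a b hba

end Matrix

theorem List.exists_finRange_eq_append_cons {m : ℕ} (k : Fin m) :
    ∃ L₁ L₂, List.finRange m = L₁ ++ k :: L₂ ∧ (∀ x ∈ L₁, x < k) ∧ ∀ x ∈ L₂, k < x := by
  obtain ⟨L₁, L₂, h⟩ := List.append_of_mem (List.mem_finRange k)
  have hsorted := List.pairwise_lt_finRange m
  rw [h, List.pairwise_append, List.pairwise_cons] at hsorted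
  exact ⟨L₁, L₂, h, fun x hx => hsorted.2.2 x hx k List.mem_cons_self, hsorted.2.1.1⟩

namespace Steinberg

variable {n : ℕ} {F : Type}

/-- `e_{i,j}(a)`, extended by the junk value `1` when `¬ i < j`, so that row words can run over
all columns. -/
def el (i j : Fin (n + 1)) (a : F) : FreeGroup (ElIdx n F) :=
  if h : i < j then FreeGroup.of ⟨(i, j, a), h⟩ else 1

theorem el_of_lt {i j : Fin (n + 1)} (h : i < j) (a : F) :
    el i j a = FreeGroup.of ⟨(i, j, a), h⟩ :=
  dif_pos h

theorem el_of_not_lt {i j : Fin (n + 1)} (h : ¬ i < j) (a : F) : el i j a = 1 :=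
  dif_neg h

theorem of_eq_el (x : ElIdx n F) : FreeGroup.of x = el x.1.1 x.1.2.1 x.1.2.2 :=
  (el_of_lt x.2 _).symm

def rowWord (i : Fin (n + 1)) (f : Fin (n + 1) → F) : FreeGroup (ElIdx n F) :=
  ((List.finRange (n + 1)).map fun k => el i k (f k)).prod

theorem rowWord_eq_of_finRange_eq {i k : Fin (n + 1)} {L₁ L₂ : List (Fin (n + 1))}
    (h : List.finRange (n + 1) = L₁ ++ k :: L₂) (f : Fin (n + 1) → F) :
    rowWord i f = (L₁.map fun k => el i k (f k)).prod * el i k (f k) *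
      (L₂.map fun k => el i k (f k)).prod := by
  simp [rowWord, h, mul_assoc]

theorem map_el_update_of_not_mem {L : List (Fin (n + 1))} {k : Fin (n + 1)} (hk : k ∉ L)
    (i : Fin (n + 1)) (f : Fin (n + 1) → F) (c : F) :
    L.map (fun k' => el i k' (Function.update f k c k')) = L.map fun k' => el i k' (f k') :=
  List.map_congr_left fun k' hk' => by
    rw [Function.update_of_ne (ne_of_mem_of_not_mem hk' hk)]

def nfWord (M : Matrix (Fin (n + 1)) (Fin (n + 1)) F) : FreeGroup (ElIdx n F) :=
  ((List.finRange (n + 1)).reverse.map fun i => rowWord i (M i)).prod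

theorem nfWord_eq_of_finRange_eq {i : Fin (n + 1)} {L₁ L₂ : List (Fin (n + 1))}
    (h : List.finRange (n + 1) = L₁ ++ i :: L₂) (M : Matrix (Fin (n + 1)) (Fin (n + 1)) F) :
    nfWord M = (L₂.reverse.map fun i => rowWord i (M i)).prod * rowWord i (M i) *
      (L₁.reverse.map fun i => rowWord i (M i)).prod := by
  simp [nfWord, h, mul_assoc]

variable [Field F]

open Matrix

abbrev relators (n : ℕ) (F : Type) [Field F] : Set (FreeGroup (ElIdx n F)) :=
  stR1 n F ∪ stR2 n F

theorem el_mul_el (i j : Fin (n + 1)) (a b : F) :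
    AreaRel (relators n F) 1 (el i j a * el i j b) (el i j (a + b)) := by
  by_cases h : i < j
  · simp only [el_of_lt h]
    exact AreaRel.of_mem (.inl ⟨i, j, h, a, b, rfl⟩)
  · simpa [el_of_not_lt h] using (AreaRel.refl (1 : FreeGroup (ElIdx n F))).mono zero_le_one

theorem el_zero (i j : Fin (n + 1)) : AreaRel (relators n F) 1 (el i j (0 : F)) 1 := by
  simpa [AreaRel] using el_mul_el i j (0 : F) 0

theorem el_inv (i j : Fin (n + 1)) (a : F) :
    AreaRel (relators n F) 2 (el i j a)⁻¹ (el i j (-a)) :=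
  calc (el i j a)⁻¹ = (el i j a)⁻¹ * 1 := (mul_one _).symm
    AreaRel (relators n F) 1 _ ((el i j a)⁻¹ * el i j 0) := (el_zero i j).symm.mul_left _
    AreaRel (relators n F) 1 _ ((el i j a)⁻¹ * (el i j a * el i j (-a))) := by
      simpa using ((el_mul_el i j a (-a)).symm.mul_left (el i j a)⁻¹)
    _ = el i j (-a) := by group

theorem el_mul_el_comm {i j k l : Fin (n + 1)} (hjk : j ≠ k) (hli : l ≠ i) (a b : F) :
    AreaRel (relators n F) 1 (el i j a * el k l b) (el k l b * el i j a) := by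
  by_cases h₁ : i < j
  · by_cases h₂ : k < l
    · refine AreaRel.of_mem (.inr ⟨i, j, k, l, h₁, h₂, a, b, ?_⟩)
      simp [stTarget, hjk, hli, el_of_lt h₁, el_of_lt h₂, commutatorElement_def, mul_assoc]
    · simpa [el_of_not_lt h₂] using (AreaRel.refl (el i j a)).mono zero_le_one
  · simpa [el_of_not_lt h₁] using (AreaRel.refl (el k l b)).mono zero_le_one

theorem el_mul_el_comm_same_row (i k l : Fin (n + 1)) (a b : F) :
    AreaRel (relators n F) 1 (el i k a * el i l b) (el i l b * el i k a) := by
  by_cases hk : k = i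
  · simpa [hk, el_of_not_lt (lt_irrefl i)] using (AreaRel.refl (el i l b)).mono zero_le_one
  by_cases hl : l = i
  · simpa [hl, el_of_not_lt (lt_irrefl i)] using (AreaRel.refl (el i k a)).mono zero_le_one
  exact el_mul_el_comm hk hl a b

theorem el_mul_el_of_lt_of_lt {i j k : Fin (n + 1)} (hij : i < j) (hjk : j < k) (a b : F) :
    AreaRel (relators n F) 1 (el i j a * el j k b) (el i k (a * b) * (el j k b * el i j a)) := by
  refine AreaRel.of_mem (.inr ⟨i, j, j, k, hij, hjk, a, b, ?_⟩)
  simp [stTarget, el_of_lt hij, el_of_lt hjk, el_of_lt (hij.trans hjk), commutatorElement_def,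
    mul_assoc]

theorem el_mul_el_conj {i' i j : Fin (n + 1)} (hi : i' < i) (hj : i < j) (a b : F) :
    AreaRel (relators n F) 3 (el i' i b * el i j a) (el i j a * el i' i b * el i' j (a * b)) :=
  calc el i' i b * el i j a
    AreaRel (relators n F) 1 _ (el i' j (b * a) * (el i j a * el i' i b)) :=
      el_mul_el_of_lt_of_lt hi hj b a
    _ = el i' j (b * a) * el i j a * el i' i b := by group
    AreaRel (relators n F) 1 _ (el i j a * el i' j (b * a) * el i' i b) :=
      (el_mul_el_comm hj.ne' (hi.trans hj).ne' _ _).mul_right _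
    _ = el i j a * (el i' j (b * a) * el i' i b) := by group
    AreaRel (relators n F) 1 _ (el i j a * (el i' i b * el i' j (a * b))) := by
      simpa [mul_comm b a] using (el_mul_el_comm_same_row i' j i (b * a) b).mul_left (el i j a)
    _ = el i j a * el i' i b * el i' j (a * b) := by group

theorem rowWord_mul_el (i k : Fin (n + 1)) (f : Fin (n + 1) → F) (b : F) :
    AreaRel (relators n F) (n + 1) (rowWord i f * el i k b)
      (rowWord i (Function.update f k (f k + b))) := by
  obtain ⟨L₁, L₂, hsplit, h₁, h₂⟩ := List.exists_finRange_eq_append_cons k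
  have hlen := congrArg List.length hsplit
  simp only [List.length_finRange, List.length_append, List.length_cons] at hlen
  set P₁ := (L₁.map fun k => el i k (f k)).prod
  set P₂ := (L₂.map fun k => el i k (f k)).prod
  have hP₂ : AreaRel (relators n F) (1 * L₂.length) (P₂ * el i k b) (el i k b * P₂) :=
    AreaRel.list_prod_map_mul fun k' _ => el_mul_el_comm_same_row i k' k _ b
  refine AreaRel.mono (k := 1 * L₂.length + 1) ?_ (by omega)
  calc rowWord i f * el i k b = P₁ * el i k (f k) * (P₂ * el i k b) := by
        rw [rowWord_eq_of_finRange_eq hsplit, mul_assoc]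
    AreaRel (relators n F) (1 * L₂.length) _ (P₁ * (el i k (f k) * el i k b) * P₂) := by
      simpa [mul_assoc] using hP₂.mul_left (P₁ * el i k (f k))
    AreaRel (relators n F) 1 _ (P₁ * el i k (f k + b) * P₂) :=
      ((el_mul_el i k _ _).mul_left P₁).mul_right P₂
    _ = rowWord i (Function.update f k (f k + b)) := by
      rw [rowWord_eq_of_finRange_eq hsplit, Function.update_self,
        map_el_update_of_not_mem (fun h => lt_irrefl k (h₁ k h)),
        map_el_update_of_not_mem (fun h => lt_irrefl k (h₂ k h))]

theorem rowWord_mul_el_of_lt {i' i j : Fin (n + 1)} (hi : i' < i) (hj : i < j)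
    (f : Fin (n + 1) → F) (a : F) :
    AreaRel (relators n F) (3 * n + 4) (rowWord i' f * el i j a)
      (el i j a * rowWord i' (Function.update f j (f j + a * f i))) := by
  obtain ⟨L₁, L₂, hsplit, h₁, h₂⟩ := List.exists_finRange_eq_append_cons i
  have hlen := congrArg List.length hsplit
  simp only [List.length_finRange, List.length_append, List.length_cons] at hlen
  set P₁ := (L₁.map fun k => el i' k (f k)).prod
  set P₂ := (L₂.map fun k => el i' k (f k)).prod
  set x := el i' i (f i)
  set g := el i j a
  set s := el i' j (a * f i)
  have hP₁ : AreaRel (relators n F) (1 * L₁.length) (P₁ * g) (g * P₁) :=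
    AreaRel.list_prod_map_mul fun k hk =>
      el_mul_el_comm (h₁ k hk).ne (hi.trans hj).ne' _ _
  have hP₂ : AreaRel (relators n F) (1 * L₂.length) (P₂ * g) (g * P₂) :=
    AreaRel.list_prod_map_mul fun k hk =>
      el_mul_el_comm (h₂ k hk).ne' (hi.trans hj).ne' _ _
  have hsP₂ : AreaRel (relators n F) (1 * L₂.length) (P₂ * s) (s * P₂) :=
    AreaRel.list_prod_map_mul fun k _ => el_mul_el_comm_same_row i' k j _ _
  refine AreaRel.mono
    (k := 1 * L₂.length + 3 + 1 * L₁.length + 1 * L₂.length + (n + 1)) ?_ (by omega)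
  calc rowWord i' f * g = P₁ * x * (P₂ * g) := by
        rw [rowWord_eq_of_finRange_eq hsplit, mul_assoc]
    AreaRel (relators n F) (1 * L₂.length) _ (P₁ * (x * g) * P₂) := by
      simpa [mul_assoc] using hP₂.mul_left (P₁ * x)
    AreaRel (relators n F) 3 _ (P₁ * (g * x * s) * P₂) :=
      ((el_mul_el_conj hi hj a (f i)).mul_left P₁).mul_right P₂
    _ = P₁ * g * (x * (s * P₂)) := by group
    AreaRel (relators n F) (1 * L₁.length) _ (g * P₁ * (x * (s * P₂))) := hP₁.mul_right _
    AreaRel (relators n F) (1 * L₂.length) _ (g * P₁ * (x * (P₂ * s))) :=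
      (hsP₂.symm.mul_left x).mul_left _
    _ = g * (rowWord i' f * s) := by
      rw [rowWord_eq_of_finRange_eq hsplit]; simp only [mul_assoc]; rfl
    AreaRel (relators n F) (n + 1) _ (g * rowWord i' (Function.update f j (f j + a * f i))) :=
      (rowWord_mul_el i' j f _).mul_left g

theorem nfWord_mul_el {M : Matrix (Fin (n + 1)) (Fin (n + 1)) F} (hM : IsUnitriangular M)
    {i j : Fin (n + 1)} (hij : i < j) (a : F) :
    AreaRel (relators n F) ((3 * n + 4) * (n + 1)) (nfWord M * el i j a)
      (nfWord (M * transvection i j a)) := by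
  obtain ⟨L₁, L₂, hsplit, h₁, h₂⟩ := List.exists_finRange_eq_append_cons i
  have hlen := congrArg List.length hsplit
  simp only [List.length_finRange, List.length_append, List.length_cons] at hlen
  set M' := M * transvection i j a
  have hrow (i' : Fin (n + 1)) : M' i' = Function.update (M i') j (M i' j + a * M i' i) :=
    mul_transvection_row M i j a i'
  have hlower : AreaRel (relators n F) ((3 * n + 4) * L₁.reverse.length)
      ((L₁.reverse.map fun i' => rowWord i' (M i')).prod * el i j a)
      (el i j a * (L₁.reverse.map fun i' => rowWord i' (M' i')).prod) :=
    AreaRel.list_prod_map_mul fun i' hi' => by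
      rw [hrow]
      exact rowWord_mul_el_of_lt (h₁ i' (List.mem_reverse.1 hi')) hij _ _
  have hupper : (L₂.reverse.map fun i' => rowWord i' (M' i')) =
      L₂.reverse.map fun i' => rowWord i' (M i') :=
    List.map_congr_left fun i' hi' => by
      rw [hrow, hM i' i (h₂ i' (List.mem_reverse.1 hi')).le,
        one_apply_ne (h₂ i' (List.mem_reverse.1 hi')).ne', mul_zero, add_zero,
        Function.update_eq_self]
  have hdiag : M' i = Function.update (M i) j (M i j + a) := by
    rw [hrow, hM i i le_rfl, one_apply_eq, mul_one]
  set Q₂ := (L₂.reverse.map fun i' => rowWord i' (M i')).prod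
  set Q₁ := (L₁.reverse.map fun i' => rowWord i' (M i')).prod
  set Q₁' := (L₁.reverse.map fun i' => rowWord i' (M' i')).prod
  refine AreaRel.mono (k := (3 * n + 4) * L₁.reverse.length + (n + 1)) ?_ (by
    rw [List.length_reverse]; nlinarith)
  calc nfWord M * el i j a = Q₂ * rowWord i (M i) * (Q₁ * el i j a) := by
        rw [nfWord_eq_of_finRange_eq hsplit, mul_assoc]
    AreaRel (relators n F) _ _ (Q₂ * (rowWord i (M i) * el i j a) * Q₁') := by
      simpa [mul_assoc] using hlower.mul_left (Q₂ * rowWord i (M i))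
    AreaRel (relators n F) (n + 1) _ (Q₂ * rowWord i (M' i) * Q₁') := by
      rw [hdiag]
      exact ((rowWord_mul_el i j (M i) a).mul_left _).mul_right _
    _ = nfWord M' := by rw [nfWord_eq_of_finRange_eq hsplit M', hupper]

theorem stPi_of (x : ElIdx n F) :
    (stPi n F (FreeGroup.of x)).val = transvection x.1.1 x.1.2.1 x.1.2.2 := by
  rw [stPi, FreeGroup.lift_apply_of]
  rfl

theorem stPi_stTarget (i₁ j₁ i₂ j₂ : Fin (n + 1)) (h₁ : i₁ < j₁) (h₂ : i₂ < j₂) (a b : F) :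
    (stPi n F (stTarget n F i₁ j₁ i₂ j₂ h₁ h₂ a b)).val =
      1 + (single i₁ j₁ a * single i₂ j₂ b - single i₂ j₂ b * single i₁ j₁ a) := by
  unfold stTarget
  split_ifs with hc₁ hc₂
  · subst hc₁
    simp [stPi_of, transvection, (h₁.trans h₂).ne']
  · subst hc₂
    simp [stPi_of, transvection, hc₁, mul_comm, Matrix.single_neg]
  · simp [hc₁, hc₂]

theorem stPi_of_mul_stPi_of {i₁ j₁ i₂ j₂ : Fin (n + 1)} (h₁ : i₁ < j₁) (h₂ : i₂ < j₂) (a b : F) :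
    stPi n F (FreeGroup.of ⟨(i₁, j₁, a), h₁⟩) * stPi n F (FreeGroup.of ⟨(i₂, j₂, b), h₂⟩) =
      stPi n F (stTarget n F i₁ j₁ i₂ j₂ h₁ h₂ a b) *
        (stPi n F (FreeGroup.of ⟨(i₂, j₂, b), h₂⟩) *
          stPi n F (FreeGroup.of ⟨(i₁, j₁, a), h₁⟩)) := by
  ext1
  simp only [Units.val_mul, stPi_of, stPi_stTarget, transvection]
  apply one_add_mul_one_add_eq
  all_goals
    rcases eq_or_ne j₁ i₂ with rfl | hc₁
    · simp [(h₁.trans h₂).ne', h₂.ne']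
    rcases eq_or_ne j₂ i₁ with rfl | hc₂
    · simp [hc₁, h₁.ne']
    simp [hc₁, hc₂]

theorem stPi_of_mem_relators {r : FreeGroup (ElIdx n F)} (hr : r ∈ relators n F) :
    stPi n F r = 1 := by
  rcases hr with ⟨i, j, h, a, b, rfl⟩ | ⟨i₁, j₁, i₂, j₂, h₁, h₂, a, b, rfl⟩
  · rw [map_mul, map_mul, map_inv, mul_inv_eq_one]
    ext1
    simp [stPi_of, transvection_mul_transvection_same _ _ h.ne]
  · rw [commutatorElement_def, map_mul, map_mul, map_mul, map_mul, map_inv, map_inv, map_inv,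
      stPi_of_mul_stPi_of]
    group

theorem exists_el_of_letter (p : ElIdx n F × Bool) :
    ∃ (i j : Fin (n + 1)) (a : F), i < j ∧
      (stPi n F (FreeGroup.mk [p])).val = transvection i j a ∧
      AreaRel (relators n F) 2 (FreeGroup.mk [p]) (el i j a) := by
  obtain ⟨x, _ | _⟩ := p
  · have hx : FreeGroup.mk [(x, false)] = (FreeGroup.of x)⁻¹ := by
      simp [FreeGroup.of, FreeGroup.inv_mk, FreeGroup.invRev]
    refine ⟨x.1.1, x.1.2.1, -x.1.2.2, x.2, ?_, ?_⟩
    · rw [hx, map_inv, stPi, FreeGroup.lift_apply_of]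
      rfl
    · rw [hx, of_eq_el]
      exact el_inv _ _ _
  · refine ⟨x.1.1, x.1.2.1, x.1.2.2, x.2, stPi_of x, ?_⟩
    exact (AreaRel.of_eq (of_eq_el x)).mono zero_le_two

theorem nfWord_one_mul_mk (L : List (ElIdx n F × Bool)) :
    IsUnitriangular (stPi n F (FreeGroup.mk L)).val ∧
      AreaRel (relators n F) (((3 * n + 4) * (n + 1) + 2) * L.length)
        (nfWord 1 * FreeGroup.mk L) (nfWord (stPi n F (FreeGroup.mk L)).val) := by
  induction L using List.reverseRecOn with
  | nil =>
    rw [← FreeGroup.one_eq_mk, map_one, Units.val_one, mul_one]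
    exact ⟨isUnitriangular_one, AreaRel.refl _⟩
  | append_singleton L p ih =>
    obtain ⟨hM, harea⟩ := ih
    obtain ⟨i, j, a, hij, hp, hpa⟩ := exists_el_of_letter p
    rw [← FreeGroup.mul_mk, map_mul, Units.val_mul, hp]
    refine ⟨hM.mul_transvection hij a, ?_⟩
    refine AreaRel.mono (k := ((3 * n + 4) * (n + 1) + 2) * L.length + 2 + (3 * n + 4) * (n + 1))
      ?_ (le_of_eq (by simp; ring))
    calc nfWord 1 * (FreeGroup.mk L * FreeGroup.mk [p])
        = nfWord 1 * FreeGroup.mk L * FreeGroup.mk [p] := (mul_assoc _ _ _).symm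
      AreaRel (relators n F) _ _ (nfWord (stPi n F (FreeGroup.mk L)).val * FreeGroup.mk [p]) :=
        harea.mul_right _
      AreaRel (relators n F) 2 _ (nfWord (stPi n F (FreeGroup.mk L)).val * el i j a) :=
        hpa.mul_left _
      AreaRel (relators n F) ((3 * n + 4) * (n + 1)) _ _ := nfWord_mul_el hM hij a

theorem areaLE_of_stPi_eq_one [DecidableEq F] {w : FreeGroup (ElIdx n F)}
    (hw : stPi n F w = 1) :
    AreaLE (relators n F) (((3 * n + 4) * (n + 1) + 2) * w.norm) w := by
  have h := (nfWord_one_mul_mk w.toWord).2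
  rw [FreeGroup.mk_toWord, hw, Units.val_one] at h
  exact h.areaLE_of_mul_left

end Steinberg

theorem stmt13_general (n : ℕ) :
    ∃ C : ℕ,
      ∀ (q : ℕ), IsPrimePow q →
        ∀ (F : Type) [Field F] [Fintype F] [DecidableEq F], Fintype.card F = q →
          (MonoidHom.ker (stPi n F) = Subgroup.normalClosure (stR1 n F ∪ stR2 n F)) ∧
          ∀ (m : ℕ) (w : FreeGroup (ElIdx n F)), w ∈ MonoidHom.ker (stPi n F) →
            FreeGroup.norm w ≤ m →
            ∃ l : ℕ, l ≤ C * m ∧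
              ∃ (u r : Fin l → FreeGroup (ElIdx n F)),
                (∀ s : Fin l, r s ∈ stR1 n F ∪ stR2 n F ∨ (r s)⁻¹ ∈ stR1 n F ∪ stR2 n F) ∧
                w = (List.ofFn fun s => (u s)⁻¹ * r s * u s).prod := by
  refine ⟨(3 * n + 4) * (n + 1) + 2, fun q _ F _ _ _ _ => ⟨le_antisymm ?_ ?_, ?_⟩⟩
  · exact fun w hw => (Steinberg.areaLE_of_stPi_eq_one hw).mem_normalClosure
  · exact Subgroup.normalClosure_le_normal fun r hr => Steinberg.stPi_of_mem_relators hr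
  · intro m w hw hm
    exact ((Steinberg.areaLE_of_stPi_eq_one hw).mono (Nat.mul_le_mul_left _ hm)).exists_ofFn

/-- For `n ≥ 2`: (i) the Steinberg relations `R_St = (St1) ∪ (St2)` present
`Unip_{n+1}(F_q)` on the generators `S_el`, i.e. `ker π` is the normal closure of `R_St`; and
(ii) there is a constant `C` depending only on `n` (independent of the prime power `q`) such
that every relation `w ∈ ker π` of length at most `m` is a product of at most `C·m`
conjugates of relators from `R_St` and their inverses. -/
theorem stmt13 (n : ℕ) (hn : 2 ≤ n) :
    ∃ C : ℕ,
      ∀ (q : ℕ), IsPrimePow q →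
        ∀ (F : Type) [Field F] [Fintype F] [DecidableEq F], Fintype.card F = q →
          (MonoidHom.ker (stPi n F) = Subgroup.normalClosure (stR1 n F ∪ stR2 n F)) ∧
          ∀ (m : ℕ) (w : FreeGroup (ElIdx n F)), w ∈ MonoidHom.ker (stPi n F) →
            FreeGroup.norm w ≤ m →
            ∃ l : ℕ, l ≤ C * m ∧
              ∃ (u r : Fin l → FreeGroup (ElIdx n F)),
                (∀ s : Fin l, r s ∈ stR1 n F ∪ stR2 n F ∨ (r s)⁻¹ ∈ stR1 n F ∪ stR2 n F) ∧
                w = (List.ofFn fun s => (u s)⁻¹ * r s * u s).prod :=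
  stmt13_general n
end

section
/- Let q be a prime power and n ≥ 2. Let G be the subgroup of GL_{n+1}(F_q[t]) generated by { e_{i,i+1}(a+bt) : a, b ∈ F_q, 1 ≤ i ≤ n } (equivalently, G consists of all (n+1)×(n+1) matrices A over F_q[t] with A(i,i)=1, A(i,j)=0 for i>j, and A(i,j) a polynomial of degree at most j−i for i<j). For 0 ≤ i ≤ n−1 let K_i = ⟨ e_{j,j+1}(a+bt) : j ∈ {1,...,n}∖{i+1}, a,b ∈ F_q ⟩. Then every g ∈ G can be written as a product of at most 2 + 4(n+1) elements of ⋃_{i=0}^{n-1} K_i. -/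
open Polynomial

/-- The group `G ≤ GL_{n+1}(F[t])` generated by the elementary matrices
`e_{i,i+1}(a + bt)`, `a, b ∈ F`, `1 ≤ i ≤ n`. -/
noncomputable def polyG (n : ℕ) (F : Type) [Field F] :
    Subgroup (Matrix (Fin (n + 1)) (Fin (n + 1)) (Polynomial F))ˣ :=
  Subgroup.closure {M | ∃ (i : Fin n) (a b : F),
    (M : Matrix (Fin (n + 1)) (Fin (n + 1)) (Polynomial F)) =
      1 + Matrix.single i.castSucc i.succ (C a + C b * X)}

/-- For `0 ≤ i ≤ n-1`, the subgroup `K_i = ⟨e_{j,j+1}(a+bt) : j ∈ {1,…,n} \ {i+1}, a,b ∈ F⟩`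
(`1`-based; here `j : Fin n` is `0`-based, so the excluded index is `j = i`). -/
noncomputable def polyK (n : ℕ) (F : Type) [Field F] (i : Fin n) :
    Subgroup (Matrix (Fin (n + 1)) (Fin (n + 1)) (Polynomial F))ˣ :=
  Subgroup.closure {M | ∃ (j : Fin n) (a b : F), j ≠ i ∧
    (M : Matrix (Fin (n + 1)) (Fin (n + 1)) (Polynomial F)) =
      1 + Matrix.single j.castSucc j.succ (C a + C b * X)}

/-!
Every element of `G` is upper unitriangular with `deg A(i,j) ≤ j - i`, and such a matrix lies in
`K_i` as soon as it vanishes on the block of rows `≤ i+1` and columns `≥ i+2`, the positions that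
need the missing generator `e_{i+1,i+2}`. Indeed, clearing its entries one at a time, always in
the rightmost nontrivial column, writes it as a product of matrices `e_{p,q}(r)` with
`deg r ≤ q - p` and `¬ (p ≤ i+1 < q)`; each of these lies in `K_i`, by induction on `q - p`,
through the relation `⁅e_{p,k}(s), e_{k,q}(r')⁆ = e_{p,q}(s r')` applied to `r = t r' + r(0)`.

Hence `g = e_{1,n+1}(g(1,n+1)) · w · u`, where `w ∈ K_0` carries the last column of `g` below
row `1` and `u ∈ K_{n-1}` is `g` with its last column cleared. The same relation writes the corner
`e_{1,n+1}(t r' + r(0))` as `⁅e_{1,2}(t), e_{2,n+1}(r')⁆ · ⁅e_{1,2}(1), e_{2,n+1}(r(0))⁆`, eight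
factors from `K_1 ∪ K_0`, so `g` is a product of `10 ≤ 2 + 4(n+1)` elements of `⋃ K_i`.
-/

open scoped commutatorElement

namespace Matrix

variable {ι R : Type*} [Fintype ι] [DecidableEq ι] [CommRing R]

theorem mul_eq_self_of_forall_ne_eq_zero {N A : Matrix ι ι R} {L : ι}
    (hN : ∀ p q, q ≠ L → N p q = 0) (hA : ∀ q, A L q = (1 : Matrix ι ι R) L q) : N * A = N :=
  ext fun p q => by
    rw [mul_apply, Finset.sum_eq_single L (fun k _ hk => by rw [hN p k hk, zero_mul]) (by simp),
      hA]
    rcases eq_or_ne q L with rfl | hq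
    · rw [one_apply_eq, mul_one]
    · rw [one_apply_ne hq.symm, mul_zero, hN p q hq]

theorem transvection_mul_eq_add_single {a b : ι} {M : Matrix ι ι R}
    (hM : ∀ q, M b q = (1 : Matrix ι ι R) b q) (c : R) :
    transvection a b c * M = M + single a b c := by
  rw [transvection, add_mul, one_mul,
    mul_eq_self_of_forall_ne_eq_zero (fun p q hq => by simp [Ne.symm hq]) hM]

theorem transvection_neg_mul_apply {a b : ι} {M : Matrix ι ι R}
    (hM : ∀ q, M b q = (1 : Matrix ι ι R) b q) (p q : ι) :
    (transvection a b (-M a b) * M) p q = if p = a ∧ q = b then 0 else M p q := by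
  rw [transvection_mul_eq_add_single hM, add_apply, single_apply]
  by_cases h : p = a ∧ q = b
  · obtain ⟨rfl, rfl⟩ := h
    simp
  · rw [if_neg fun h' => h ⟨h'.1.symm, h'.2.symm⟩, if_neg h, add_zero]

def transvectionUnit {i j : ι} (h : i ≠ j) (c : R) : (Matrix ι ι R)ˣ where
  val := transvection i j c
  inv := transvection i j (-c)
  val_inv := by rw [transvection_mul_transvection_same i j h, add_neg_cancel, transvection_zero]
  inv_val := by rw [transvection_mul_transvection_same i j h, neg_add_cancel, transvection_zero]

@[simp]
theorem coe_transvectionUnit {i j : ι} (h : i ≠ j) (c : R) :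
    (transvectionUnit h c : Matrix ι ι R) = transvection i j c := rfl

@[simp]
theorem transvectionUnit_zero {i j : ι} (h : i ≠ j) : transvectionUnit h (0 : R) = 1 :=
  Units.ext (transvection_zero i j)

theorem transvectionUnit_mul_transvectionUnit {i j : ι} (h : i ≠ j) (c d : R) :
    transvectionUnit h c * transvectionUnit h d = transvectionUnit h (c + d) :=
  Units.ext (transvection_mul_transvection_same i j h c d)

@[simp]
theorem transvectionUnit_inv {i j : ι} (h : i ≠ j) (c : R) :
    (transvectionUnit h c)⁻¹ = transvectionUnit h (-c) :=
  Units.ext (by simp [transvectionUnit])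

theorem commutatorElement_transvectionUnit {i j k : ι} (hij : i ≠ j) (hjk : j ≠ k)
    (hik : i ≠ k) (c d : R) :
    ⁅transvectionUnit hij c, transvectionUnit hjk d⁆ = transvectionUnit hik (c * d) := by
  rw [commutatorElement_def, mul_inv_eq_iff_eq_mul, mul_inv_eq_iff_eq_mul]
  ext1
  simp only [Units.val_mul, coe_transvectionUnit, transvection, mul_add, mul_one, add_mul,
    one_mul, single_mul_single_same, ne_eq, hjk.symm, not_false_eq_true,
    single_mul_single_of_ne, add_zero, hik.symm]
  abel

theorem transvectionUnit_eq_commutator_mul_commutator {i j k : ι} (hij : i ≠ j) (hjk : j ≠ k)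
    (hik : i ≠ k) (r : R[X]) :
    transvectionUnit hik r =
      ⁅transvectionUnit hij (X : R[X]), transvectionUnit hjk r.divX⁆ *
        ⁅transvectionUnit hij (1 : R[X]), transvectionUnit hjk (C (r.coeff 0))⁆ := by
  rw [commutatorElement_transvectionUnit hij hjk hik,
    commutatorElement_transvectionUnit hij hjk hik, transvectionUnit_mul_transvectionUnit, one_mul,
    X_mul_divX_add]

theorem exists_mem_coe_eq_of_transvectionUnit_mem [LinearOrder ι]
    (H : Subgroup (Matrix ι ι R)ˣ) {M : Matrix ι ι R}
    (hM : ∀ p q, q ≤ p → M p q = (1 : Matrix ι ι R) p q)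
    (hH : ∀ p q (hpq : p < q), transvectionUnit hpq.ne (M p q) ∈ H) :
    ∃ u ∈ H, (u : Matrix ι ι R) = M := by
  classical
  generalize hS : Finset.univ.filter (fun x : ι × ι => x.1 < x.2 ∧ M x.1 x.2 ≠ 0) = S
  induction S using Finset.strongInduction generalizing M with
  | H S ih =>
  have hmem : ∀ p q, (p, q) ∈ S ↔ p < q ∧ M p q ≠ 0 := by simp [← hS]
  rcases S.eq_empty_or_nonempty with rfl | hSne
  · refine ⟨1, one_mem H, ext fun p q => ?_⟩
    rcases le_or_gt q p with hqp | hpq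
    · exact (hM p q hqp).symm
    · simpa [one_apply_ne hpq.ne, eq_comm] using fun h => (hmem p q).mpr ⟨hpq, h⟩
  -- with `b` the rightmost nontrivial column, row `b` is trivial, so the row operation
  -- `transvection a b (-M a b)` clears exactly the entry `(a, b)`
  obtain ⟨⟨a, b⟩, habS, hmax⟩ := S.exists_max_image Prod.snd hSne
  obtain ⟨hab, -⟩ := (hmem a b).mp habS
  have hrow : ∀ q, M b q = (1 : Matrix ι ι R) b q := fun q => by
    rcases le_or_gt q b with hqb | hbq
    · exact hM b q hqb
    · rw [one_apply_ne hbq.ne]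
      by_contra h
      exact (hmax _ ((hmem b q).mpr ⟨hbq, h⟩)).not_gt hbq
  have hM' := transvection_neg_mul_apply (a := a) hrow
  obtain ⟨u, huH, hu⟩ := ih (S.erase (a, b)) (Finset.erase_ssubset habS)
    (M := transvection a b (-M a b) * M)
    (fun p q hqp => by
      rw [hM', if_neg (by rintro ⟨rfl, rfl⟩; exact hqp.not_gt hab), hM p q hqp])
    (fun p q hpq => by
      rw [hM']
      split_ifs
      · rw [transvectionUnit_zero]; exact one_mem H
      · exact hH p q hpq)
    (Finset.ext fun ⟨p, q⟩ => by
      simp only [Finset.mem_filter, Finset.mem_univ, true_and, Finset.mem_erase, ne_eq,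
        Prod.mk.injEq, hM', hmem]
      split_ifs with h <;> simp [h])
  refine ⟨transvectionUnit hab.ne (M a b) * u, mul_mem (hH a b hab) huH, ?_⟩
  rw [Units.val_mul, hu, coe_transvectionUnit, ← mul_assoc,
    transvection_mul_transvection_same _ _ hab.ne, add_neg_cancel, transvection_zero, one_mul]

theorem transvection_mul_mul_eq_of_row_eq_one {i L : ι} (hiL : i ≠ L) {G : Matrix ι ι R}
    (hG : ∀ q, G L q = (1 : Matrix ι ι R) L q) :
    transvection i L (G i L) *
        of (fun p q => if q = L ∧ p ≠ i then G p q else (1 : Matrix ι ι R) p q) *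
        of (fun p q => if q = L then (1 : Matrix ι ι R) p q else G p q) = G := by
  set W : Matrix ι ι R := of fun p q => if q = L ∧ p ≠ i then G p q else (1 : Matrix ι ι R) p q
  set M : Matrix ι ι R := of fun p q => if q = L then (1 : Matrix ι ι R) p q else G p q
  have hW : ∀ q, W L q = (1 : Matrix ι ι R) L q := fun q => by simp [W, hG]
  have hM : ∀ q, M L q = (1 : Matrix ι ι R) L q := fun q => by simp [M, hG]
  have hN : ∀ p q, q ≠ L → (W + single i L (G i L) - 1) p q = 0 := fun p q hq => by
    simp [W, hq, Ne.symm hq]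
  calc transvection i L (G i L) * W * M = M + (W + single i L (G i L) - 1) * M := by
        rw [transvection_mul_eq_add_single hW, sub_mul, one_mul]
        abel
    _ = M + (W + single i L (G i L) - 1) := by rw [mul_eq_self_of_forall_ne_eq_zero hN hM]
    _ = G := ext fun p q => by
      rcases eq_or_ne q L with rfl | hq
      · by_cases hp : p = i
        · subst hp
          simp [M, W, one_apply_ne hiL]
        · simp [M, W, hp, Ne.symm hp]
      · simp [M, W, hq, Ne.symm hq]

end Matrix

section PolyUnitriangular

variable {R : Type*} [CommRing R] {m : ℕ}

def IsPolyUnitriangular (M : Matrix (Fin m) (Fin m) R[X]) : Prop :=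
  (∀ p q, q ≤ p → M p q = (1 : Matrix (Fin m) (Fin m) R[X]) p q) ∧
    ∀ p q, (M p q).natDegree ≤ (q : ℕ) - p

theorem isPolyUnitriangular_one : IsPolyUnitriangular (1 : Matrix (Fin m) (Fin m) R[X]) :=
  ⟨fun _ _ _ => rfl, fun p q => by rw [Matrix.one_apply]; split_ifs <;> simp⟩

theorem IsPolyUnitriangular.apply_eq_zero {M : Matrix (Fin m) (Fin m) R[X]}
    (hM : IsPolyUnitriangular M) {p q : Fin m} (hqp : q < p) : M p q = 0 := by
  rw [hM.1 p q hqp.le, Matrix.one_apply_ne hqp.ne']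

theorem IsPolyUnitriangular.mul {M N : Matrix (Fin m) (Fin m) R[X]}
    (hM : IsPolyUnitriangular M) (hN : IsPolyUnitriangular N) : IsPolyUnitriangular (M * N) := by
  refine ⟨fun p q hqp => ?_, fun p q => ?_⟩
  · rw [Matrix.mul_apply, Finset.sum_eq_single p]
    · rw [hM.1 p p le_rfl, Matrix.one_apply_eq, one_mul, hN.1 p q hqp]
    · intro k _ hkp
      rcases lt_or_gt_of_ne hkp with hkp | hpk
      · rw [hM.apply_eq_zero hkp, zero_mul]
      · rw [hN.apply_eq_zero (hqp.trans_lt hpk), mul_zero]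
    · simp
  · rw [Matrix.mul_apply]
    refine natDegree_sum_le_of_forall_le _ _ fun k _ => ?_
    rcases lt_or_ge k p with hkp | hpk
    · simp [hM.apply_eq_zero hkp]
    rcases lt_or_ge q k with hqk | hkq
    · simp [hN.apply_eq_zero hqk]
    · have := hM.2 p k
      have := hN.2 k q
      exact natDegree_mul_le.trans (by omega)

theorem IsPolyUnitriangular.of_forall_eq_or_eq {G M : Matrix (Fin m) (Fin m) R[X]}
    (hG : IsPolyUnitriangular G)
    (hM : ∀ p q, M p q = G p q ∨ M p q = (1 : Matrix (Fin m) (Fin m) R[X]) p q) :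
    IsPolyUnitriangular M := by
  refine ⟨fun p q hqp => ?_, fun p q => ?_⟩ <;> rcases hM p q with h | h <;> rw [h]
  exacts [hG.1 p q hqp, hG.2 p q, isPolyUnitriangular_one.2 p q]

theorem isPolyUnitriangular_transvection (j : Fin m) {r : R[X]} (hr : r.natDegree ≤ 1) :
    IsPolyUnitriangular (Matrix.transvection j.castSucc j.succ r) := by
  refine ⟨fun p q hqp => ?_, fun p q => ?_⟩
  · rw [Matrix.transvection, Matrix.add_apply, Matrix.single_apply_of_ne, add_zero]
    rintro ⟨rfl, rfl⟩
    exact hqp.not_gt j.castSucc_lt_succ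
  · by_cases h : j.castSucc = p ∧ j.succ = q
    · obtain ⟨rfl, rfl⟩ := h
      simpa [Matrix.transvection, j.castSucc_lt_succ.ne] using hr
    · rw [Matrix.transvection, Matrix.add_apply, Matrix.single_apply_of_ne (h := h), add_zero,
        Matrix.one_apply]
      split_ifs <;> simp

end PolyUnitriangular

theorem isPolyUnitriangular_of_mem_polyG {n : ℕ} {F : Type} [Field F]
    {g : (Matrix (Fin (n + 1)) (Fin (n + 1)) F[X])ˣ} (hg : g ∈ polyG n F) :
    IsPolyUnitriangular (g : Matrix (Fin (n + 1)) (Fin (n + 1)) F[X]) := by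
  induction hg using Subgroup.closure_induction'' with
  | mem x hx =>
    obtain ⟨j, a, b, hx⟩ := hx
    rw [hx]
    exact isPolyUnitriangular_transvection j (by compute_degree!)
  | inv_mem x hx =>
    obtain ⟨j, a, b, hx⟩ := hx
    rw [show x = Matrix.transvectionUnit j.castSucc_lt_succ.ne (C a + C b * X) from Units.ext hx,
      Matrix.transvectionUnit_inv]
    exact isPolyUnitriangular_transvection j (by compute_degree!)
  | one => exact isPolyUnitriangular_one
  | mul x y _ _ hx hy => exact hx.mul hy

section PolyK

variable {n : ℕ} {F : Type} [Field F]

theorem transvectionUnit_mem_polyK_of_succ (i : Fin n) {p q : Fin (n + 1)} (hpq : p < q)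
    (hq : (q : ℕ) = p + 1) (hi : (i : ℕ) ≠ p) {r : F[X]} (hr : r.natDegree ≤ 1) :
    Matrix.transvectionUnit hpq.ne r ∈ polyK n F i := by
  let j : Fin n := ⟨p, by omega⟩
  refine Subgroup.subset_closure ⟨j, r.coeff 0, r.coeff 1, fun h => hi (by rw [← h]), ?_⟩
  rw [Matrix.coe_transvectionUnit, Matrix.transvection, show j.castSucc = p from Fin.ext rfl,
    show j.succ = q from Fin.ext hq.symm]
  congr 2
  conv_lhs => rw [eq_X_add_C_of_natDegree_le_one hr]
  ring

theorem transvectionUnit_mem_polyK (i : Fin n) {p q : Fin (n + 1)} (hpq : p < q)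
    (hi : ¬((p : ℕ) ≤ i ∧ (i : ℕ) < q)) {r : F[X]} (hr : r.natDegree ≤ (q : ℕ) - p) :
    Matrix.transvectionUnit hpq.ne r ∈ polyK n F i := by
  obtain ⟨d, hd⟩ : ∃ d, (q : ℕ) = p + d + 1 := ⟨q - p - 1, by omega⟩
  induction d generalizing p r with
  | zero => exact transvectionUnit_mem_polyK_of_succ i hpq hd (by omega) (by omega)
  | succ d ih =>
    let k : Fin (n + 1) := ⟨p + 1, by omega⟩
    have hpk : p < k := Fin.lt_def.mpr (by simp [k])
    have hkq : k < q := Fin.lt_def.mpr (by simp [k]; omega)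
    have hA : ∀ s : F[X], s.natDegree ≤ 1 → Matrix.transvectionUnit hpk.ne s ∈ polyK n F i :=
      fun s hs => transvectionUnit_mem_polyK_of_succ i hpk rfl (by omega) hs
    have hB : ∀ s : F[X], s.natDegree ≤ d + 1 →
        Matrix.transvectionUnit hkq.ne s ∈ polyK n F i :=
      fun s hs => ih hkq (by simp [k]; omega) (by simp [k]; omega) (by simp [k]; omega)
    have hcomm : ∀ {x y}, x ∈ polyK n F i → y ∈ polyK n F i → ⁅x, y⁆ ∈ polyK n F i :=
      fun hx hy => by
        rw [commutatorElement_def]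
        exact mul_mem (mul_mem (mul_mem hx hy) (inv_mem hx)) (inv_mem hy)
    rw [Matrix.transvectionUnit_eq_commutator_mul_commutator hpk.ne hkq.ne hpq.ne r]
    refine mul_mem (hcomm (hA _ natDegree_X_le) (hB _ ?_)) (hcomm (hA _ (by simp)) (hB _ (by simp)))
    rw [natDegree_divX_eq_natDegree_tsub_one]
    omega

theorem exists_mem_polyK_coe_eq (i : Fin n) {M : Matrix (Fin (n + 1)) (Fin (n + 1)) F[X]}
    (hM : IsPolyUnitriangular M)
    (hblock : ∀ p q : Fin (n + 1), (p : ℕ) ≤ i → (i : ℕ) < q → M p q = 0) :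
    ∃ u ∈ polyK n F i, (u : Matrix (Fin (n + 1)) (Fin (n + 1)) F[X]) = M :=
  Matrix.exists_mem_coe_eq_of_transvectionUnit_mem _ hM.1 fun p q hpq => by
    by_cases h : (p : ℕ) ≤ i ∧ (i : ℕ) < q
    · rw [hblock p q h.1 h.2, Matrix.transvectionUnit_zero]
      exact one_mem _
    · exact transvectionUnit_mem_polyK i hpq h (hM.2 p q)

end PolyK

section Decomposition

variable {n : ℕ} {F : Type} [Field F]

theorem exists_eq_transvectionUnit_mul_mul {g : (Matrix (Fin (n + 2)) (Fin (n + 2)) F[X])ˣ}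
    (hg : IsPolyUnitriangular (g : Matrix (Fin (n + 2)) (Fin (n + 2)) F[X])) :
    ∃ w ∈ polyK (n + 1) F 0, ∃ u ∈ polyK (n + 1) F (Fin.last n),
      g = Matrix.transvectionUnit (Fin.last_pos' (n := n + 1)).ne (g 0 (Fin.last (n + 1))) *
        w * u := by
  set G : Matrix (Fin (n + 2)) (Fin (n + 2)) F[X] := ↑g
  set L := Fin.last (n + 1)
  obtain ⟨w, hwK, hw⟩ := exists_mem_polyK_coe_eq (F := F) 0
    (M := Matrix.of fun p q => if q = L ∧ p ≠ 0 then G p q else (1 : Matrix _ _ F[X]) p q)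
    (hg.of_forall_eq_or_eq fun p q => by simp only [Matrix.of_apply]; split_ifs <;> simp)
    fun p q hp hq => by
      obtain rfl : p = 0 := Fin.ext (by simpa using hp)
      have hq0 : (0 : Fin (n + 2)) ≠ q := fun h => by simp [← h] at hq
      simp [Matrix.one_apply_ne hq0]
  obtain ⟨u, huK, hu⟩ := exists_mem_polyK_coe_eq (F := F) (Fin.last n)
    (M := Matrix.of fun p q => if q = L then (1 : Matrix _ _ F[X]) p q else G p q)
    (hg.of_forall_eq_or_eq fun p q => by simp only [Matrix.of_apply]; split_ifs <;> simp)
    fun p q hp hq => by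
      have hqL : q = L := Fin.ext (by simp [L] at hq ⊢; omega)
      have hpL : p ≠ L := fun h => by simp [h, L] at hp
      simp [hqL, Matrix.one_apply_ne hpL]
  refine ⟨w, hwK, u, huK, Units.ext ?_⟩
  rw [Units.val_mul, Units.val_mul, hw, hu, Matrix.coe_transvectionUnit]
  exact (Matrix.transvection_mul_mul_eq_of_row_eq_one Fin.last_pos'.ne
    fun q => hg.1 _ q (Fin.le_last q)).symm
theorem exists_commutator_mul_commutator_eq_transvectionUnit {r : F[X]}
    (hr : r.natDegree ≤ n + 2) :
    ∃ a ∈ polyK (n + 2) F 1, ∃ b ∈ polyK (n + 2) F 0, ∃ a' ∈ polyK (n + 2) F 1,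
      ∃ b' ∈ polyK (n + 2) F 0,
        ⁅a, b⁆ * ⁅a', b'⁆ = Matrix.transvectionUnit (Fin.last_pos' (n := n + 2)).ne r := by
  have h01 : (0 : Fin (n + 3)) < 1 := Fin.zero_lt_one
  have h1L : (1 : Fin (n + 3)) < Fin.last (n + 2) := Fin.lt_def.mpr (by simp)
  have hA : ∀ s : F[X], s.natDegree ≤ 1 → Matrix.transvectionUnit h01.ne s ∈ polyK (n + 2) F 1 :=
    fun s hs => transvectionUnit_mem_polyK_of_succ 1 h01 rfl (by simp) hs
  have hB : ∀ s : F[X], s.natDegree ≤ n + 1 →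
      Matrix.transvectionUnit h1L.ne s ∈ polyK (n + 2) F 0 :=
    fun s hs => transvectionUnit_mem_polyK 0 h1L (by simp) (by simpa using hs)
  refine ⟨_, hA X natDegree_X_le, _, hB r.divX ?_, _, hA 1 (by simp), _,
    hB (C (r.coeff 0)) (by simp),
    (Matrix.transvectionUnit_eq_commutator_mul_commutator h01.ne h1L.ne _ r).symm⟩
  rw [natDegree_divX_eq_natDegree_tsub_one]
  omega

end Decomposition

theorem stmt15_general (n : ℕ) (hn : 2 ≤ n)
    (F : Type) [Field F] :
    ∀ g ∈ polyG n F, ∃ gs : List (Matrix (Fin (n + 1)) (Fin (n + 1)) (Polynomial F))ˣ,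
      gs.length ≤ 2 + 4 * (n + 1) ∧
      (∀ x ∈ gs, ∃ i : Fin n, x ∈ polyK n F i) ∧
      gs.prod = g := by
  obtain ⟨n, rfl⟩ : ∃ m, n = m + 2 := ⟨n - 2, by omega⟩
  intro g hg
  have hgU := isPolyUnitriangular_of_mem_polyG hg
  obtain ⟨w, hw, u, hu, hg_eq⟩ := exists_eq_transvectionUnit_mul_mul hgU
  obtain ⟨a, ha, b, hb, a', ha', b', hb', hcorner⟩ :=
    exists_commutator_mul_commutator_eq_transvectionUnit (F := F)
      (by simpa using hgU.2 0 (Fin.last (n + 2)))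
  refine ⟨[a, b, a⁻¹, b⁻¹, a', b', a'⁻¹, b'⁻¹, w, u], by simp; omega, ?_, ?_⟩
  · simp only [List.mem_cons, List.not_mem_nil, or_false]
    rintro x (rfl | rfl | rfl | rfl | rfl | rfl | rfl | rfl | rfl | rfl)
    exacts [⟨1, ha⟩, ⟨0, hb⟩, ⟨1, inv_mem ha⟩, ⟨0, inv_mem hb⟩, ⟨1, ha'⟩, ⟨0, hb'⟩,
      ⟨1, inv_mem ha'⟩, ⟨0, inv_mem hb'⟩, ⟨0, hw⟩, ⟨_, hu⟩]
  · rw [hg_eq, ← hcorner]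
    simp [commutatorElement_def, mul_assoc]

/-- For every prime power `q` and `n ≥ 2`, every element of the group `G`
of unipotent matrices with polynomial entries is a product of at most `2 + 4(n+1)` elements
of `⋃_{i=0}^{n-1} K_i`. -/
theorem stmt15 (n : ℕ) (hn : 2 ≤ n) (q : ℕ) (hq : IsPrimePow q)
    (F : Type) [Field F] [Fintype F] (hF : Fintype.card F = q) :
    ∀ g ∈ polyG n F, ∃ gs : List (Matrix (Fin (n + 1)) (Fin (n + 1)) (Polynomial F))ˣ,
      gs.length ≤ 2 + 4 * (n + 1) ∧
      (∀ x ∈ gs, ∃ i : Fin n, x ∈ polyK n F i) ∧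
      gs.prod = g :=
  stmt15_general n hn F
end
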